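/- arXiv:2311.16558 — 2 statements merged into one kernel-verified Lean document; each statement's English description precedes it below -/
import Mathlib

section
/- Let κ be an uncountable cardinal and let X be a nonempty topological space. Then the power X^κ (with the product topology) is SHD if and only if X^κ is not sequentially compact. -/
open Filter Topology Set

/-- `x : ℕ → X` has no convergent subsequence. -/
def NoConvSubseq {X : Type*} [TopologicalSpace X] (x : ℕ → X) : Prop :=
  ∀ φ : ℕ → ℕ, StrictMono φ → ∀ y : X, ¬ Filter.Tendsto (x ∘ φ) Filter.atTop (nhds y)

/-- Selectively highly divergent. -/
def SHD (X : Type*) [TopologicalSpace X] : Prop :=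
  ∀ U : ℕ → Set X, (∀ n, IsOpen (U n)) → (∀ n, (U n).Nonempty) →
    ∃ x : ℕ → X, (∀ n, x n ∈ U n) ∧ NoConvSubseq x

/-- Weakly selectively highly divergent. -/
def WSHD (X : Type*) [TopologicalSpace X] : Prop :=
  ∀ U : ℕ → Set X, (∀ n, IsOpen (U n)) → (∀ n, (U n).Nonempty) →
    ∃ A : Set ℕ, A.Infinite ∧ ∃ x : ℕ → X, (∀ n ∈ A, x n ∈ U n) ∧
      ∀ φ : ℕ → ℕ, StrictMono φ → (∀ n, φ n ∈ A) →
        ∀ y : X, ¬ Filter.Tendsto (x ∘ φ) Filter.atTop (nhds y)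

/-- A sequence of nonempty open sets converges to a point. -/
def OpenSeqTendsto {X : Type*} [TopologicalSpace X] (U : ℕ → Set X) (x : X) : Prop :=
  ∀ V : Set X, IsOpen V → x ∈ V → ∃ m : ℕ, ∀ n ≥ m, U n ⊆ V

/-- Openly highly divergent: no sequence of nonempty open sets converges to a point. -/
def OHD (X : Type*) [TopologicalSpace X] : Prop :=
  ¬ ∃ (U : ℕ → Set X) (x : X),
      (∀ n, IsOpen (U n)) ∧ (∀ n, (U n).Nonempty) ∧ OpenSeqTendsto U x

/-- `x` has a countable local (neighbourhood) base. -/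
def HasCountableLocalBase {X : Type*} [TopologicalSpace X] (x : X) : Prop :=
  ∃ B : Set (Set X), B.Countable ∧ (∀ V ∈ B, IsOpen V ∧ x ∈ V) ∧
    ∀ U : Set X, IsOpen U → x ∈ U → ∃ V ∈ B, V ⊆ U

/-- `x` has a countable local π-base. -/
def HasCountableLocalPiBase {X : Type*} [TopologicalSpace X] (x : X) : Prop :=
  ∃ B : Set (Set X), B.Countable ∧ (∀ V ∈ B, IsOpen V ∧ V.Nonempty) ∧
    ∀ U : Set X, IsOpen U → x ∈ U → ∃ V ∈ B, V ⊆ U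

/-- UC: every point has uncountable character. -/
def UC (X : Type*) [TopologicalSpace X] : Prop := ∀ x : X, ¬ HasCountableLocalBase x

/-- π-UC: every point has uncountable π-character. -/
def PiUC (X : Type*) [TopologicalSpace X] : Prop := ∀ x : X, ¬ HasCountableLocalPiBase x

/-- Sequentially discrete: every convergent sequence is eventually constant. -/
def SD (X : Type*) [TopologicalSpace X] : Prop :=
  ∀ (x : ℕ → X) (y : X), Filter.Tendsto x Filter.atTop (nhds y) →
    ∃ m : ℕ, ∀ n ≥ m, x n = x m

/-- The Pixley–Roy hyperspace: nonempty finite subsets of `X`. -/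
def PR (X : Type*) : Type _ := {F : Set X // F.Finite ∧ F.Nonempty}

/-- The basic sets `[F, U]` of the Pixley–Roy topology. -/
def PRBasic {X : Type*} (F U : Set X) : Set (PR X) :=
  {G : PR X | F ⊆ G.1 ∧ G.1 ⊆ U}

instance PR.instTopologicalSpace {X : Type*} [TopologicalSpace X] :
    TopologicalSpace (PR X) :=
  TopologicalSpace.generateFrom
    {S | ∃ (F : PR X) (U : Set X), IsOpen U ∧ S = PRBasic F.1 U}

/-- P-space: countable intersections of open sets are open. -/
def PSpace (X : Type*) [TopologicalSpace X] : Prop :=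
  ∀ U : ℕ → Set X, (∀ n, IsOpen (U n)) → IsOpen (⋂ n, U n)

/-- `Σ(Y, p, κ)`: points of `Y^κ` differing from the constant `p` on countably many coordinates. -/
def SigmaProd (Y : Type*) (p : Y) (κ : Type*) : Set (κ → Y) :=
  {x | {α : κ | x α ≠ p}.Countable}

/-- `σ(Y, p, κ)`: points of `Y^κ` differing from the constant `p` on finitely many coordinates. -/
def SmallSigmaProd (Y : Type*) (p : Y) (κ : Type*) : Set (κ → Y) :=
  {x | {α : κ | x α ≠ p}.Finite}


/-!
A sequence with no convergent subsequence is one selection for the constant sequence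
`Uₙ = univ`, so SHD spaces are not sequentially compact. Conversely, let `f` be a sequence in
`X^κ` with no convergent subsequence and let `Uₙ` be nonempty open sets. Each `Uₙ` contains a
basic box restricting only the finitely many coordinates in some `Iₙ`, and `S = ⋃ Iₙ` is
countable, so `κ \ S` still has cardinality `κ`. Choosing `xₙ` inside the box on `S` and copying
`fₙ` onto `κ \ S` along a bijection `κ \ S ≃ κ` gives `xₙ ∈ Uₙ`, and a convergent subsequence of
`(xₙ)` would project to a convergent subsequence of `(fₙ)`.
-/

section NoConvSubseq

variable {X Y : Type*} [TopologicalSpace X] [TopologicalSpace Y]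

theorem exists_noConvSubseq_of_not_seqCompactSpace (h : ¬ SeqCompactSpace X) :
    ∃ x : ℕ → X, NoConvSubseq x := by
  by_contra! hx
  refine h ⟨fun x _ => ?_⟩
  obtain ⟨φ, hφ, y, hy⟩ : ∃ φ : ℕ → ℕ, StrictMono φ ∧ ∃ y, Tendsto (x ∘ φ) atTop (𝓝 y) := by
    simpa [NoConvSubseq] using hx x
  exact ⟨y, mem_univ y, φ, hφ, hy⟩

theorem NoConvSubseq.of_comp {g : X → Y} (hg : Continuous g) {x : ℕ → X}
    (h : NoConvSubseq (g ∘ x)) : NoConvSubseq x :=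
  fun φ hφ y hy => h φ hφ (g y) ((hg.tendsto y).comp hy)

theorem SHD.not_seqCompactSpace [Nonempty X] (h : SHD X) : ¬ SeqCompactSpace X := by
  intro _
  obtain ⟨x, -, hx⟩ := h (fun _ => univ) (fun _ => isOpen_univ) (fun _ => univ_nonempty)
  obtain ⟨y, φ, hφ, hy⟩ := SeqCompactSpace.tendsto_subseq x
  exact hx φ hφ y hy

end NoConvSubseq

theorem Set.Countable.nonempty_compl_equiv {κ : Type*} [Uncountable κ] {S : Set κ}
    (hS : S.Countable) : Nonempty (↥Sᶜ ≃ κ) :=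
  Cardinal.eq.mp <| Cardinal.mk_compl_of_infinite S <|
    hS.le_aleph0.trans_lt Cardinal.aleph0_lt_mk

theorem IsOpen.exists_finset_forall_eq_imp_mem {κ : Type*} {X : κ → Type*}
    [∀ α, TopologicalSpace (X α)] {U : Set (∀ α, X α)} (hU : IsOpen U) {p : ∀ α, X α}
    (hp : p ∈ U) : ∃ I : Finset κ, ∀ z, (∀ α ∈ I, z α = p α) → z ∈ U := by
  obtain ⟨I, u, hu, hsub⟩ := isOpen_pi_iff.mp hU p hp
  exact ⟨I, fun z hz => hsub fun α hα => hz α hα ▸ (hu α hα).2⟩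

theorem shd_pi_of_not_seqCompactSpace {κ : Type*} [Uncountable κ] {X : Type*}
    [TopologicalSpace X] (h : ¬ SeqCompactSpace (κ → X)) : SHD (κ → X) := by
  obtain ⟨f, hf⟩ := exists_noConvSubseq_of_not_seqCompactSpace h
  intro U hUo hUne
  choose p hp using hUne
  choose I hI using fun n => (hUo n).exists_finset_forall_eq_imp_mem (hp n)
  set S : Set κ := ⋃ n, (I n : Set κ)
  obtain ⟨e⟩ : Nonempty (↥Sᶜ ≃ κ) :=
    (countable_iUnion fun n => (I n).countable_toSet).nonempty_compl_equiv
  classical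
  let x : ℕ → κ → X := fun n α => if hα : α ∈ S then p n α else f n (e ⟨α, hα⟩)
  have hx_mem : ∀ n, x n ∈ U n :=
    fun n => hI n _ fun α hα => dif_pos (mem_iUnion_of_mem n hα)
  have hx_compl : (fun z β => z (e.symm β : κ)) ∘ x = f := by
    ext n β
    simp only [Function.comp_apply, x, dif_neg (e.symm β).2, Subtype.coe_eta,
      Equiv.apply_symm_apply]
  exact ⟨x, hx_mem, NoConvSubseq.of_comp (by fun_prop) (hx_compl ▸ hf)⟩

theorem statement1 {κ : Type*} [Uncountable κ] (X : Type*) [TopologicalSpace X] [Nonempty X] :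
    SHD (κ → X) ↔ ¬ SeqCompactSpace (κ → X) :=
  ⟨SHD.not_seqCompactSpace, shd_pi_of_not_seqCompactSpace⟩
end

section
/- Let X be a Hausdorff space. Then the following statements are equivalent: (1) the Pixley–Roy hyperspace 𝔉[X] is OHD; (2) 𝔉[X] is UC; (3) 𝔉[X] is π-UC; (4) X is UC. -/
open Filter Topology Set

/-- The basic sets form a topological basis for the Pixley–Roy topology. -/
lemma PR.isBasis {X : Type*} [TopologicalSpace X] :
    TopologicalSpace.IsTopologicalBasis
      {S : Set (PR X) | ∃ (F : PR X) (U : Set X), IsOpen U ∧ S = PRBasic F.1 U} := by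
  refine ⟨?_, ?_, rfl⟩
  · rintro t₁ ⟨F₁, U₁, hU₁, rfl⟩ t₂ ⟨F₂, U₂, hU₂, rfl⟩ H ⟨⟨h11, h12⟩, ⟨h21, h22⟩⟩
    have hne : (F₁.1 ∪ F₂.1).Nonempty := F₁.2.2.mono subset_union_left
    have hfin : (F₁.1 ∪ F₂.1).Finite := F₁.2.1.union F₂.2.1
    refine ⟨PRBasic (F₁.1 ∪ F₂.1) (U₁ ∩ U₂),
      ⟨⟨F₁.1 ∪ F₂.1, hfin, hne⟩, U₁ ∩ U₂, hU₁.inter hU₂, rfl⟩,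
      ⟨union_subset h11 h21, subset_inter h12 h22⟩, ?_⟩
    rintro G ⟨hG1, hG2⟩
    exact ⟨⟨subset_union_left.trans hG1, hG2.trans inter_subset_left⟩,
      ⟨subset_union_right.trans hG1, hG2.trans inter_subset_right⟩⟩
  · apply eq_univ_of_forall
    intro H
    exact ⟨PRBasic H.1 univ, ⟨H, univ, isOpen_univ, rfl⟩, subset_rfl, subset_univ _⟩

lemma PRBasic_isOpen {X : Type*} [TopologicalSpace X] (F : PR X) {U : Set X}
    (hU : IsOpen U) : IsOpen (PRBasic F.1 U) :=
  PR.isBasis.isOpen ⟨F, U, hU, rfl⟩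

/-- In any space, OHD implies UC. -/
lemma ohd_imp_uc {Y : Type*} [TopologicalSpace Y] (h : OHD Y) : UC Y := by
  intro y ⟨B, hBc, hBo, hBb⟩
  obtain ⟨V₀, hV₀, -⟩ := hBb univ isOpen_univ (mem_univ y)
  obtain ⟨f, hf⟩ := hBc.exists_eq_range ⟨V₀, hV₀⟩
  have hfB : ∀ n, f n ∈ B := fun n => hf ▸ mem_range_self n
  refine h ⟨fun n => ⋂ i ∈ Finset.range (n + 1), f i, y, ?_, ?_, ?_⟩
  · intro n
    exact isOpen_biInter_finset fun i _ => (hBo (f i) (hfB i)).1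
  · intro n
    exact ⟨y, mem_iInter₂.2 fun i _ => (hBo (f i) (hfB i)).2⟩
  · intro V hV hyV
    obtain ⟨W, hWB, hWV⟩ := hBb V hV hyV
    rw [hf] at hWB
    obtain ⟨m, rfl⟩ := hWB
    refine ⟨m, fun n hn z hz => hWV ?_⟩
    exact mem_iInter₂.1 hz m (Finset.mem_range.2 (Nat.lt_succ_of_le hn))

/-- In any space, π-UC implies OHD. -/
lemma piuc_imp_ohd {Y : Type*} [TopologicalSpace Y] (h : PiUC Y) : OHD Y := by
  rintro ⟨U, x, hUo, hUne, hUt⟩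
  refine h x ⟨range U, countable_range U, ?_, ?_⟩
  · rintro V ⟨n, rfl⟩
    exact ⟨hUo n, hUne n⟩
  · intro V hV hxV
    obtain ⟨m, hm⟩ := hUt V hV hxV
    exact ⟨U m, mem_range_self m, hm m le_rfl⟩

/-- Separating a point from a finite set in a T2 space. -/
lemma t2_sep_finite {X : Type*} [TopologicalSpace X] [T2Space X] {s : Set X}
    (hs : s.Finite) {x : X} (hx : x ∉ s) :
    ∃ W₀ W₁ : Set X, IsOpen W₀ ∧ IsOpen W₁ ∧ x ∈ W₀ ∧ s ⊆ W₁ ∧ W₀ ∩ W₁ = ∅ := by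
  revert hx
  refine Set.Finite.induction_on
    (motive := fun s _ => x ∉ s → ∃ W₀ W₁ : Set X, IsOpen W₀ ∧ IsOpen W₁ ∧ x ∈ W₀ ∧
      s ⊆ W₁ ∧ W₀ ∩ W₁ = ∅) s hs ?_ ?_
  · intro _
    exact ⟨univ, ∅, isOpen_univ, isOpen_empty, mem_univ x, empty_subset _,
      inter_empty _⟩
  · intro y t hyt htfin ih hx
    have hxt : x ∉ t := fun h => hx (mem_insert_of_mem _ h)
    have hxy : x ≠ y := fun h => hx (h ▸ mem_insert _ _)
    obtain ⟨W₀, W₁, hW₀, hW₁, hxW₀, hsW₁, hdisj⟩ := ih hxt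
    obtain ⟨A, C, hA, hC, hxA, hyC, hAC⟩ := t2_separation hxy
    refine ⟨W₀ ∩ A, W₁ ∪ C, hW₀.inter hA, hW₁.union hC, ⟨hxW₀, hxA⟩, ?_, ?_⟩
    · rintro z (rfl | hz)
      · exact Or.inr hyC
      · exact Or.inl (hsW₁ hz)
    · apply eq_empty_of_forall_notMem
      rintro z ⟨⟨hz₀, hzA⟩, (hz₁ | hzC)⟩
      · exact (eq_empty_iff_forall_notMem.1 hdisj) z ⟨hz₀, hz₁⟩
      · exact (Disjoint.ne_of_mem hAC hzA hzC) rfl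

theorem statement12 {X : Type*} [TopologicalSpace X] [T2Space X] :
    List.TFAE [OHD (PR X), UC (PR X), PiUC (PR X), UC X] := by
  tfae_have 1 → 2 := fun h => ohd_imp_uc h
  tfae_have 3 → 1 := fun h => piuc_imp_ohd h
  tfae_have 2 → 4 := by
    intro h2 x ⟨B, hBc, hBo, hBb⟩
    set G : PR X := ⟨{x}, finite_singleton x, singleton_nonempty x⟩ with hG
    refine h2 G ⟨(fun V => PRBasic {x} V) '' B, hBc.image _, ?_, ?_⟩
    · rintro V ⟨W, hWB, rfl⟩
      exact ⟨PRBasic_isOpen G (hBo W hWB).1,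
        subset_rfl, singleton_subset_iff.2 (hBo W hWB).2⟩
    · intro S hS hGS
      obtain ⟨T, ⟨F, U, hU, rfl⟩, ⟨hF1, hF2⟩, hTS⟩ :=
        PR.isBasis.exists_subset_of_mem_open hGS hS
      have hFeq : F.1 = {x} := by
        rcases (subset_singleton_iff_eq.1 hF1) with h | h
        · exact absurd h (F.2.2.ne_empty)
        · exact h
      have hxU : x ∈ U := hF2 rfl
      obtain ⟨W, hWB, hWU⟩ := hBb U hU hxU
      refine ⟨PRBasic {x} W, ⟨W, hWB, rfl⟩, ?_⟩
      rintro H ⟨hH1, hH2⟩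
      exact hTS ⟨hFeq ▸ hH1, hH2.trans hWU⟩
  tfae_have 4 → 3 := by
    intro h4 G ⟨B, hBc, hBo, hBb⟩
    obtain ⟨x₀, hx₀⟩ := G.2.2
    have hdiff : (G.1 \ {x₀}).Finite := G.2.1.diff
    have hxnot : x₀ ∉ G.1 \ {x₀} := fun h => h.2 rfl
    obtain ⟨W₀, W₁, hW₀, hW₁, hxW₀, hGW₁, hdisj⟩ := t2_sep_finite hdiff hxnot
    -- enumerate the π-base
    have hGuniv : G ∈ PRBasic G.1 univ := ⟨subset_rfl, subset_univ _⟩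
    obtain ⟨V₀, hV₀, -⟩ := hBb (PRBasic G.1 univ) (PRBasic_isOpen G isOpen_univ) hGuniv
    obtain ⟨g, hg⟩ := hBc.exists_eq_range ⟨V₀, hV₀⟩
    have hgB : ∀ n, g n ∈ B := fun n => hg ▸ mem_range_self n
    -- for each n, choose a basic set inside g n
    have key : ∀ n, ∃ (F : PR X) (U : Set X),
        IsOpen U ∧ F.1 ⊆ U ∧ PRBasic F.1 U ⊆ g n := by
      intro n
      obtain ⟨H, hH⟩ := (hBo (g n) (hgB n)).2
      obtain ⟨T, ⟨F, U, hU, rfl⟩, ⟨hm1, hm2⟩, hsub⟩ :=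
        PR.isBasis.exists_subset_of_mem_open hH (hBo (g n) (hgB n)).1
      exact ⟨F, U, hU, hm1.trans hm2, hsub⟩
    choose F U hUo hFU hsub using key
    -- the candidate countable local base at x₀
    refine h4 x₀ ⟨{A | ∃ n, x₀ ∈ U n ∩ W₀ ∧ A = U n ∩ W₀}, ?_, ?_, ?_⟩
    · refine (countable_range fun n => U n ∩ W₀).mono ?_
      rintro A ⟨n, -, rfl⟩
      exact mem_range_self n
    · rintro A ⟨n, hx, rfl⟩
      exact ⟨(hUo n).inter hW₀, hx⟩
    · intro O hO hxO
      set W : Set X := (O ∩ W₀) ∪ W₁ with hWdef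
      have hWopen : IsOpen W := (hO.inter hW₀).union hW₁
      have hGW : G.1 ⊆ W := by
        intro y hy
        by_cases hyx : y = x₀
        · exact Or.inl ⟨hyx ▸ hxO, hyx ▸ hxW₀⟩
        · exact Or.inr (hGW₁ ⟨hy, hyx⟩)
      obtain ⟨V, hVB, hVS⟩ := hBb (PRBasic G.1 W) (PRBasic_isOpen G hWopen)
        ⟨subset_rfl, hGW⟩
      rw [hg] at hVB
      obtain ⟨n, rfl⟩ := hVB
      have hbasic : PRBasic (F n).1 (U n) ⊆ PRBasic G.1 W := (hsub n).trans hVS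
      -- G.1 ⊆ F n
      have hGF : G.1 ⊆ (F n).1 := (hbasic ⟨subset_rfl, hFU n⟩).1
      -- U n ⊆ W
      have hUW : U n ⊆ W := by
        intro u hu
        have hne : ((F n).1 ∪ {u}).Nonempty := ⟨u, Or.inr rfl⟩
        have hfin : ((F n).1 ∪ {u}).Finite := (F n).2.1.union (finite_singleton u)
        have hmem : (⟨(F n).1 ∪ {u}, hfin, hne⟩ : PR X) ∈ PRBasic (F n).1 (U n) :=
          ⟨subset_union_left, union_subset (hFU n) (singleton_subset_iff.2 hu)⟩
        exact (hbasic hmem).2 (Or.inr rfl)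
      have hxU : x₀ ∈ U n := hFU n (hGF hx₀)
      refine ⟨U n ∩ W₀, ⟨n, ⟨hxU, hxW₀⟩, rfl⟩, ?_⟩
      rintro z ⟨hzU, hzW₀⟩
      rcases hUW hzU with ⟨hzO, -⟩ | hzW₁
      · exact hzO
      · exact (eq_empty_iff_forall_notMem.1 hdisj z ⟨hzW₀, hzW₁⟩).elim
  tfae_finish
end
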